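/- arXiv:2604.15031 — 5 statements merged into one kernel-verified Lean document; each statement's English description precedes it below -/
import Mathlib

section
/- Let H be a k-bounded antichain hypergraph on 2n vertices whose edges all have size at least 2, and let p = 1/(2n). Then w_p(H) ≤ 1/2, i.e., Σ_{E ∈ E(H)} (2n)^{−|E|} ≤ 1/2. -/
open Finset

theorem Nat.two_mul_choose_le_pow {m s : ℕ} (hs : 2 ≤ s) : 2 * m.choose s ≤ m ^ s :=
  calc 2 * m.choose s ≤ s.factorial * m.choose s :=
        Nat.mul_le_mul_right _ (hs.trans (Nat.self_le_factorial s))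
    _ = m.descFactorial s := (Nat.descFactorial_eq_factorial_mul_choose m s).symm
    _ ≤ m ^ s := Nat.descFactorial_le_pow m s

theorem inv_pow_le_inv_two_mul_choose {𝕜 : Type*} [Field 𝕜] [LinearOrder 𝕜]
    [IsStrictOrderedRing 𝕜] {m s : ℕ} (hs : 2 ≤ s) (hsm : s ≤ m) :
    ((m : 𝕜) ^ s)⁻¹ ≤ (2 * (m.choose s : 𝕜))⁻¹ := by
  have hchoose : 0 < m.choose s := Nat.choose_pos hsm
  exact inv_anti₀ (by positivity) (mod_cast Nat.two_mul_choose_le_pow hs)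

theorem IsAntichain.sum_inv_card_pow_le_half {α 𝕜 : Type*} [Fintype α] [Field 𝕜] [LinearOrder 𝕜]
    [IsStrictOrderedRing 𝕜] {𝒜 : Finset (Finset α)}
    (h𝒜 : IsAntichain (· ⊆ ·) (𝒜 : Set (Finset α))) (hcard : ∀ s ∈ 𝒜, 2 ≤ #s) :
    ∑ s ∈ 𝒜, ((Fintype.card α : 𝕜) ^ #s)⁻¹ ≤ 2⁻¹ :=
  calc ∑ s ∈ 𝒜, ((Fintype.card α : 𝕜) ^ #s)⁻¹
      ≤ ∑ s ∈ 𝒜, (2 * ((Fintype.card α).choose #s : 𝕜))⁻¹ :=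
        sum_le_sum fun s hs => inv_pow_le_inv_two_mul_choose (hcard s hs) (card_le_univ s)
    _ = 2⁻¹ * ∑ s ∈ 𝒜, ((Fintype.card α).choose #s : 𝕜)⁻¹ := by
        simp only [mul_inv, mul_sum]
    _ ≤ 2⁻¹ * 1 := by
        gcongr
        exact lubell_yamamoto_meshalkin_inequality_sum_inv_choose h𝒜
    _ = 2⁻¹ := mul_one _

theorem stmt_7_general {V : Type*} [Fintype V] (n k : ℕ)
    (H : Finset (Finset V)) (hV : Fintype.card V = 2 * n)
    (hH : IsAntichain (· ⊆ ·) (H : Set (Finset V)))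
    (hsize : ∀ E ∈ H, 2 ≤ E.card ∧ E.card ≤ k) :
    ∑ E ∈ H, (1 / (2 * n : ℝ)) ^ E.card ≤ 1 / 2 := by
  have h := hH.sum_inv_card_pow_le_half (𝕜 := ℝ) fun E hE => (hsize E hE).1
  simpa only [hV, Nat.cast_mul, Nat.cast_ofNat, one_div, inv_pow] using h

/-- A k-bounded antichain on 2n vertices all of whose edges have size at least 2
has total p-weight at most 1/2 for p = 1/(2n). -/
theorem stmt_7 {V : Type*} [Fintype V] [DecidableEq V] (n k : ℕ)
    (H : Finset (Finset V)) (hV : Fintype.card V = 2 * n)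
    (hH : IsAntichain (· ⊆ ·) (H : Set (Finset V)))
    (hsize : ∀ E ∈ H, 2 ≤ E.card ∧ E.card ≤ k) :
    ∑ E ∈ H, (1 / (2 * n : ℝ)) ^ E.card ≤ 1 / 2 :=
  stmt_7_general n k H hV hH hsize
end

section
/- Let H be an antichain hypergraph on a vertex set of size 2n, let p = 1/(2n), and let E be a set of vertices. Then the total p-weight of edges of H strictly containing E is at most (2n)^{−|E|}. In particular, w_p(∂_E H) ≤ 1 where ∂_E H = {F \ E : E ⊊ F ∈ E(H)}. -/
/-!
Removing `E` from the edges strictly containing it gives an antichain, so by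
the LYM inequality `∑ 1 / C(2n, |F \ E|) ≤ 1`; since `C(2n, j) ≤ (2n)^j`, the link has
`p`-weight at most `1`, and multiplying back by `p^|E|` gives the first bound.
-/

open Finset

section

variable {α : Type*}

theorem Finset.sum_inv_card_pow_card_le_one [Fintype α] {𝒜 : Finset (Finset α)}
    (h𝒜 : IsAntichain (· ⊆ ·) (𝒜 : Set (Finset α))) :
    ∑ s ∈ 𝒜, (1 / (Fintype.card α : ℝ)) ^ #s ≤ 1 := by
  refine le_trans (sum_le_sum fun s _ => ?_) (lubell_yamamoto_meshalkin_inequality_sum_inv_choose h𝒜)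
  have hchoose_pos : (0 : ℝ) < (Fintype.card α).choose #s := by
    exact_mod_cast Nat.choose_pos (card_le_univ s)
  rw [one_div, inv_pow]
  exact inv_anti₀ hchoose_pos (by exact_mod_cast Nat.choose_le_pow _ _)

theorem IsAntichain.image_sdiff [DecidableEq α] {𝒜 : Set (Finset α)} {E : Finset α}
    (h𝒜 : IsAntichain (· ⊆ ·) 𝒜) (hE : ∀ F ∈ 𝒜, E ⊆ F) :
    IsAntichain (· ⊆ ·) ((· \ E) '' 𝒜) := by
  rintro _ ⟨A, hA, rfl⟩ _ ⟨B, hB, rfl⟩ hne hsub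
  refine h𝒜 hA hB (ne_of_apply_ne (· \ E) hne) ?_
  simpa [sdiff_union_of_subset (hE A hA), sdiff_union_of_subset (hE B hB)] using
    union_subset_union_left (t := E) hsub

theorem Finset.sum_ssuperset_inv_card_pow_card_sub_le_one [Fintype α] [DecidableEq α]
    {𝒜 : Finset (Finset α)} (h𝒜 : IsAntichain (· ⊆ ·) (𝒜 : Set (Finset α))) (E : Finset α) :
    ∑ F ∈ 𝒜.filter (E ⊂ ·), (1 / (Fintype.card α : ℝ)) ^ (#F - #E) ≤ 1 := by
  have hE : ∀ F ∈ 𝒜.filter (E ⊂ ·), E ⊆ F := fun F hF => (mem_filter.1 hF).2.1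
  have hlink : IsAntichain (· ⊆ ·)
      (((𝒜.filter (E ⊂ ·)).image (· \ E) : Finset (Finset α)) : Set (Finset α)) := by
    rw [coe_image]
    exact (h𝒜.subset (coe_subset.2 (filter_subset _ _))).image_sdiff (by simpa using hE)
  have hinj : Set.InjOn (· \ E) (𝒜.filter (E ⊂ ·) : Set (Finset α)) :=
    (superset_injOn_sdiff E).mono fun F hF => hE F hF
  calc ∑ F ∈ 𝒜.filter (E ⊂ ·), (1 / (Fintype.card α : ℝ)) ^ (#F - #E)
      = ∑ G ∈ (𝒜.filter (E ⊂ ·)).image (· \ E), (1 / (Fintype.card α : ℝ)) ^ #G := by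
        rw [sum_image hinj]
        exact sum_congr rfl fun F hF => by rw [card_sdiff_of_subset (hE F hF)]
    _ ≤ 1 := sum_inv_card_pow_card_le_one hlink

end

/-- For an antichain H on 2n vertices and p = 1/(2n), the total p-weight of edges
strictly containing a set E is at most (2n)^{-|E|}; in particular the link
∂_E H has p-weight at most 1. -/
theorem stmt_8 {V : Type*} [Fintype V] [DecidableEq V] (n : ℕ)
    (H : Finset (Finset V)) (hV : Fintype.card V = 2 * n)
    (hH : IsAntichain (· ⊆ ·) (H : Set (Finset V)))
    (E : Finset V) :
    (∑ F ∈ H.filter (fun F => E ⊂ F), (1 / (2 * n : ℝ)) ^ F.card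
        ≤ (1 / (2 * n : ℝ)) ^ E.card) ∧
    (∑ F ∈ H.filter (fun F => E ⊂ F), (1 / (2 * n : ℝ)) ^ (F.card - E.card) ≤ 1) := by
  set p : ℝ := 1 / (2 * n : ℝ)
  have hlink : ∑ F ∈ H.filter (E ⊂ ·), p ^ (#F - #E) ≤ 1 := by
    simpa [p, hV] using sum_ssuperset_inv_card_pow_card_sub_le_one hH E
  refine ⟨?_, hlink⟩
  calc ∑ F ∈ H.filter (E ⊂ ·), p ^ #F
      = p ^ #E * ∑ F ∈ H.filter (E ⊂ ·), p ^ (#F - #E) := by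
        rw [mul_sum]
        refine sum_congr rfl fun F hF => ?_
        rw [← pow_add, Nat.add_sub_cancel' (card_le_card (mem_filter.1 hF).2.1)]
    _ ≤ p ^ #E := mul_le_of_le_one_right (by positivity) hlink
end

section
/- Let H be a k-bounded hypergraph on vertex set V, C ⊆ V, and G a family of subsets of V, each of size between 2 and k, such that every edge of H contained in C contains some member of G. Suppose Δ_{s,p}(H) ≤ (w_p(H)/|V|)·p^{s−1} for all 2 ≤ s ≤ k, and w_p(G) ≤ 2δpn where |V| = 2n. Then w_p(H[C]) ≤ δ·w_p(H). -/
/-!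
Every edge of `H` inside `C` contains some `E ∈ G`, so a union bound over `G` controls `w_p(H[C])`
by the sum of the codegree weights `Δ_{|E|,p}(H) ≤ (w_p(H) / 2n) p^{|E|-1}`. Since every member of
`G` is nonempty, `∑_{E ∈ G} p^{|E|-1} = w_p(G) / p ≤ 2δn`, and the two factors `2n` cancel.
-/

open Finset

theorem div_mul_le_of_nonneg {K : Type*} [Field K] [LinearOrder K] {a : K} (ha : 0 ≤ a) (b : K) :
    a / b * b ≤ a := by
  rcases eq_or_ne b 0 with rfl | hb
  · simpa using ha
  · rw [div_mul_cancel₀ a hb]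

namespace Finset

theorem sum_biUnion_le_sum_sum {ι α β : Type*} [DecidableEq α] [AddCommMonoid β] [PartialOrder β]
    [IsOrderedAddMonoid β] {f : α → β} (hf : ∀ x, 0 ≤ f x) (s : Finset ι) (t : ι → Finset α) :
    ∑ x ∈ s.biUnion t, f x ≤ ∑ i ∈ s, ∑ x ∈ t i, f x := by
  rw [← sup_eq_biUnion]
  refine s.apply_sup_le_sum (f := fun u ↦ ∑ x ∈ u, f x) sum_empty fun {u v} ↦ ?_
  rw [← sum_union_inter]
  exact le_add_of_nonneg_right (sum_nonneg fun x _ ↦ hf x)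

end Finset

namespace Hypergraph

variable {V : Type*}

def weight (p : ℝ) (H : Finset (Finset V)) : ℝ := ∑ F ∈ H, p ^ F.card

theorem weight_nonneg {p : ℝ} (hp : 0 ≤ p) (H : Finset (Finset V)) : 0 ≤ weight p H :=
  sum_nonneg fun _ _ ↦ pow_nonneg hp _

theorem weight_filter_subset_le_sum_weight_filter_superset [DecidableEq V] {p : ℝ} (hp : 0 ≤ p)
    {H G : Finset (Finset V)} {C : Finset V} (hcover : ∀ F ∈ H, F ⊆ C → ∃ E ∈ G, E ⊆ F) :
    weight p (H.filter (· ⊆ C)) ≤ ∑ E ∈ G, weight p (H.filter (E ⊆ ·)) := by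
  have hsub : H.filter (· ⊆ C) ⊆ G.biUnion fun E ↦ H.filter (E ⊆ ·) := by
    intro F hF
    rw [mem_filter] at hF
    obtain ⟨E, hE, hEF⟩ := hcover F hF.1 hF.2
    exact mem_biUnion.2 ⟨E, hE, mem_filter.2 ⟨hF.1, hEF⟩⟩
  calc weight p (H.filter (· ⊆ C))
      ≤ ∑ F ∈ G.biUnion (fun E ↦ H.filter (E ⊆ ·)), p ^ F.card :=
        sum_le_sum_of_subset_of_nonneg hsub fun F _ _ ↦ pow_nonneg hp _
    _ ≤ _ := sum_biUnion_le_sum_sum (fun F ↦ pow_nonneg hp _) _ _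

theorem mul_sum_pow_card_sub_one {G : Finset (Finset V)} (hG : ∀ E ∈ G, E.Nonempty) (p : ℝ) :
    p * ∑ E ∈ G, p ^ (E.card - 1) = weight p G := by
  rw [mul_sum]
  exact sum_congr rfl fun E hE ↦ mul_pow_sub_one (hG E hE).card_pos.ne' p

end Hypergraph

open Hypergraph in
theorem stmt_11_general {V : Type*} [Fintype V] [DecidableEq V] (k n : ℕ)
    (H G : Finset (Finset V)) (C : Finset V) (p δ : ℝ)
    (hp0 : 0 < p) (hδ : 0 < δ)
    (hV : Fintype.card V = 2 * n)
    (hG : ∀ E ∈ G, 2 ≤ E.card ∧ E.card ≤ k)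
    (hcover : ∀ F ∈ H, F ⊆ C → ∃ E ∈ G, E ⊆ F)
    (hΔ : ∀ s : ℕ, 2 ≤ s → s ≤ k → ∀ L : Finset V, L.card = s →
      ∑ F ∈ H.filter (fun F => L ⊆ F), p ^ F.card
        ≤ ((∑ F ∈ H, p ^ F.card) / (Fintype.card V : ℝ)) * p ^ (s - 1))
    (hGw : ∑ E ∈ G, p ^ E.card ≤ 2 * δ * p * n) :
    ∑ F ∈ H.filter (fun F => F ⊆ C), p ^ F.card ≤ δ * ∑ F ∈ H, p ^ F.card := by
  set w := weight p H
  have hGsum : ∑ E ∈ G, p ^ (E.card - 1) ≤ 2 * δ * n := by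
    refine le_of_mul_le_mul_left ?_ hp0
    rw [mul_sum_pow_card_sub_one (fun E hE ↦ card_pos.1 (by linarith [hG E hE])), weight]
    linarith
  calc weight p (H.filter (· ⊆ C))
      ≤ ∑ E ∈ G, weight p (H.filter (E ⊆ ·)) :=
        weight_filter_subset_le_sum_weight_filter_superset hp0.le hcover
    _ ≤ ∑ E ∈ G, w / (2 * n) * p ^ (E.card - 1) := by
        gcongr with E hE
        exact_mod_cast hV ▸ hΔ E.card (hG E hE).1 (hG E hE).2 E rfl
    _ ≤ w / (2 * n) * (2 * δ * n) := by
        rw [← mul_sum]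
        exact mul_le_mul_of_nonneg_left hGsum (div_nonneg (weight_nonneg hp0.le H) (by positivity))
    -- no cancellation when `n = 0`, where `w / 0 = 0`
    _ = δ * (w / (2 * n) * (2 * n)) := by ring
    _ ≤ δ * w := by gcongr; exact div_mul_le_of_nonneg (weight_nonneg hp0.le H) _

/-- Almost-independence bound: if every edge of H inside C contains a member of G,
Δ_{s,p}(H) ≤ (w_p(H)/|V|)·p^{s-1} for 2 ≤ s ≤ k, and w_p(G) ≤ 2δpn (|V| = 2n),
then w_p(H[C]) ≤ δ·w_p(H). -/
theorem stmt_11 {V : Type*} [Fintype V] [DecidableEq V] (k n : ℕ)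
    (H G : Finset (Finset V)) (C : Finset V) (p δ : ℝ)
    (hp0 : 0 < p) (hp1 : p ≤ 1) (hδ : 0 < δ)
    (hV : Fintype.card V = 2 * n)
    (hbdd : ∀ E ∈ H, E.card ≤ k)
    (hG : ∀ E ∈ G, 2 ≤ E.card ∧ E.card ≤ k)
    (hcover : ∀ F ∈ H, F ⊆ C → ∃ E ∈ G, E ⊆ F)
    (hΔ : ∀ s : ℕ, 2 ≤ s → s ≤ k → ∀ L : Finset V, L.card = s →
      ∑ F ∈ H.filter (fun F => L ⊆ F), p ^ F.card
        ≤ ((∑ F ∈ H, p ^ F.card) / (Fintype.card V : ℝ)) * p ^ (s - 1))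
    (hGw : ∑ E ∈ G, p ^ E.card ≤ 2 * δ * p * n) :
    ∑ F ∈ H.filter (fun F => F ⊆ C), p ^ F.card ≤ δ * ∑ F ∈ H, p ^ F.card :=
  stmt_11_general k n H G C p δ hp0 hδ hV hG hcover hΔ hGw
end

section
/- Let H be an antichain hypergraph on a vertex set of size 2n with p = 1/(2n), and let F be a subfamily of pairwise incomparable sets, each of which is a proper subset of some edge of H and each of size at least 2. Define H' = (H \ ⟨F⟩) ∪ F, where ⟨F⟩ denotes the up-closure of F (all sets containing some member of F). Then w_p(H'^{>1}) ≥ w_p(H^{>1}), where H^{>1} denotes edges of size at least 2. (Lemma 4.8: the weight of large edges does not decrease when replacing edges by incomparable shadows, given all edges of F have size ≥ 2.) -/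
/-! Write `p = 1/(2n)` and let `D` be the edges of `H` lying above some `A ∈ F`. Members of
`F` are proper subsets of edges, hence not edges of the antichain `H`, so it suffices to show
that `D` weighs at most `F`. By a union bound the weight of `D` is at most
`∑_{A ∈ F} ∑_{E ∈ H, A ⊆ E} p^|E| = ∑_{A ∈ F} p^|A| w_p(∂_A H)`, and the link
`∂_A H = {E \ A : A ⊆ E ∈ H}` is again an antichain, so `w_p(∂_A H) ≤ 1` by the LYM
inequality together with `(2n choose k) ≤ (2n)^k`. -/

open Finset

namespace Finset

variable {α : Type*}

theorem sum_filter_exists_le_sum_sum_filter {ι κ : Type*} (s : Finset ι) (t : Finset κ)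
    (r : ι → κ → Prop) [∀ i j, Decidable (r i j)] {f : ι → ℝ} (hf : ∀ i ∈ s, 0 ≤ f i) :
    ∑ i ∈ s with ∃ j ∈ t, r i j, f i ≤ ∑ j ∈ t, ∑ i ∈ s with r i j, f i := by
  calc ∑ i ∈ s with ∃ j ∈ t, r i j, f i
      ≤ ∑ i ∈ s with ∃ j ∈ t, r i j, ∑ j ∈ t with r i j, f i := by
        refine sum_le_sum fun i hi => ?_
        obtain ⟨his, j, hj, hij⟩ := mem_filter.1 hi
        exact single_le_sum (f := fun _ => f i) (fun _ _ => hf i his) (mem_filter.2 ⟨hj, hij⟩)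
    _ ≤ ∑ i ∈ s, ∑ j ∈ t with r i j, f i :=
        sum_le_sum_of_subset_of_nonneg (filter_subset _ _)
          fun i his _ => sum_nonneg fun _ _ => hf i his
    _ = ∑ j ∈ t, ∑ i ∈ s with r i j, f i := by
        simp only [sum_filter]
        exact sum_comm

theorem _root_.IsAntichain.image_sdiff_s12 [DecidableEq α] {𝒜 : Finset (Finset α)}
    (h𝒜 : IsAntichain (· ⊆ ·) (𝒜 : Set (Finset α))) (A : Finset α) :
    IsAntichain (· ⊆ ·)
      (((𝒜.filter (A ⊆ ·)).image (· \ A) : Finset (Finset α)) : Set (Finset α)) := by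
  intro S₁ hS₁ S₂ hS₂ hne hsub
  obtain ⟨E₁, hE₁, rfl⟩ := mem_image.1 (mem_coe.1 hS₁)
  obtain ⟨E₂, hE₂, rfl⟩ := mem_image.1 (mem_coe.1 hS₂)
  obtain ⟨hE₁𝒜, hAE₁⟩ := mem_filter.1 hE₁
  obtain ⟨hE₂𝒜, hAE₂⟩ := mem_filter.1 hE₂
  refine hne (congrArg (· \ A) (h𝒜.eq hE₁𝒜 hE₂𝒜 ?_))
  rw [← sdiff_union_of_subset hAE₁, ← sdiff_union_of_subset hAE₂]
  exact union_subset_union hsub subset_rfl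

theorem sum_pow_card_le_one_of_isAntichain [Fintype α] {𝒜 : Finset (Finset α)}
    (h𝒜 : IsAntichain (· ⊆ ·) (𝒜 : Set (Finset α))) {p : ℝ} (hp₀ : 0 ≤ p)
    (hp : p * Fintype.card α ≤ 1) :
    ∑ S ∈ 𝒜, p ^ #S ≤ 1 := by
  refine (sum_le_sum fun S _ => ?_).trans (lubell_yamamoto_meshalkin_inequality_sum_inv_choose h𝒜)
  have hchoose : 0 < ((Fintype.card α).choose #S : ℝ) := by
    exact_mod_cast Nat.choose_pos (card_le_univ S)
  rw [← one_div, le_div_iff₀ hchoose]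
  calc p ^ #S * (Fintype.card α).choose #S ≤ p ^ #S * (Fintype.card α : ℝ) ^ #S := by
        gcongr
        exact_mod_cast Nat.choose_le_pow _ _
    _ = (p * Fintype.card α) ^ #S := (mul_pow _ _ _).symm
    _ ≤ 1 := pow_le_one₀ (by positivity) hp

theorem sum_pow_card_filter_superset_le [Fintype α] [DecidableEq α] {𝒜 : Finset (Finset α)}
    (h𝒜 : IsAntichain (· ⊆ ·) (𝒜 : Set (Finset α))) (A : Finset α) {p : ℝ} (hp₀ : 0 ≤ p)
    (hp : p * Fintype.card α ≤ 1) :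
    ∑ E ∈ 𝒜 with A ⊆ E, p ^ #E ≤ p ^ #A := by
  have hinj : Set.InjOn (· \ A) (𝒜.filter (A ⊆ ·) : Set (Finset α)) := by
    intro E₁ h₁ E₂ h₂ h
    rw [← sdiff_union_of_subset (mem_filter.1 h₁).2, ← sdiff_union_of_subset (mem_filter.1 h₂).2]
    exact congrArg (· ∪ A) h
  calc ∑ E ∈ 𝒜 with A ⊆ E, p ^ #E = ∑ E ∈ 𝒜 with A ⊆ E, p ^ #(E \ A) * p ^ #A := by
        refine sum_congr rfl fun E hE => ?_
        rw [← pow_add, card_sdiff_add_card_eq_card (mem_filter.1 hE).2]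
    _ = (∑ S ∈ (𝒜.filter (A ⊆ ·)).image (· \ A), p ^ #S) * p ^ #A := by
        rw [sum_image hinj, sum_mul]
    _ ≤ 1 * p ^ #A := by
        gcongr
        exact sum_pow_card_le_one_of_isAntichain (IsAntichain.image_sdiff_s12 h𝒜 A) hp₀ hp
    _ = p ^ #A := one_mul _

end Finset

theorem stmt_12_general {V : Type*} [Fintype V] [DecidableEq V] (n : ℕ)
    (H F : Finset (Finset V)) (hV : Fintype.card V = 2 * n)
    (hH : IsAntichain (· ⊆ ·) (H : Set (Finset V)))
    (hFsub : ∀ A ∈ F, ∃ E ∈ H, A ⊂ E)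
    (hF2 : ∀ A ∈ F, 2 ≤ A.card) :
    ∑ E ∈ H.filter (fun E => 2 ≤ E.card), (1 / (2 * n : ℝ)) ^ E.card
    ≤ ∑ E ∈ ((H \ H.filter (fun E => ∃ A ∈ F, A ⊆ E)) ∪ F).filter (fun E => 2 ≤ E.card),
        (1 / (2 * n : ℝ)) ^ E.card := by
  set p : ℝ := 1 / (2 * n : ℝ)
  have hp₀ : 0 ≤ p := by positivity
  have hp : p * Fintype.card V ≤ 1 := by
    rw [hV, Nat.cast_mul, Nat.cast_ofNat, one_div_mul_eq_div]
    exact div_self_le_one _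
  set D := H.filter (fun E => ∃ A ∈ F, A ⊆ E)
  have hFH : Disjoint (H \ D) F := by
    refine disjoint_left.2 fun E hE hEF => ?_
    obtain ⟨E', hE', hEE'⟩ := hFsub E hEF
    exact hH (mem_sdiff.1 hE).1 hE' hEE'.ne hEE'.subset
  have hD : ∑ E ∈ D, p ^ #E ≤ ∑ A ∈ F, p ^ #A :=
    (sum_filter_exists_le_sum_sum_filter H F (fun E A => A ⊆ E) fun _ _ => by positivity).trans
      (sum_le_sum fun A _ => sum_pow_card_filter_superset_le hH A hp₀ hp)
  calc ∑ E ∈ H with 2 ≤ #E, p ^ #E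
      = ∑ E ∈ H \ D with 2 ≤ #E, p ^ #E + ∑ E ∈ D with 2 ≤ #E, p ^ #E := by
        rw [← sum_union (disjoint_filter_filter sdiff_disjoint), ← filter_union,
          sdiff_union_of_subset (filter_subset _ _)]
    _ ≤ ∑ E ∈ H \ D with 2 ≤ #E, p ^ #E + ∑ A ∈ F, p ^ #A := by
        refine add_le_add le_rfl <| le_trans ?_ hD
        exact sum_le_sum_of_subset_of_nonneg (filter_subset _ _) fun _ _ _ => by positivity
    _ = ∑ E ∈ (H \ D ∪ F) with 2 ≤ #E, p ^ #E := by
        rw [filter_union, filter_true_of_mem hF2,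
          sum_union (hFH.mono_left (filter_subset _ _))]

/-- Replacing the up-closure of a family F of incomparable proper sub-edges (each of
size ≥ 2) by F itself does not decrease the p-weight of edges of size ≥ 2,
for an antichain H on 2n vertices with p = 1/(2n). -/
theorem stmt_12 {V : Type*} [Fintype V] [DecidableEq V] (n : ℕ)
    (H F : Finset (Finset V)) (hV : Fintype.card V = 2 * n)
    (hH : IsAntichain (· ⊆ ·) (H : Set (Finset V)))
    (hF : IsAntichain (· ⊆ ·) (F : Set (Finset V)))
    (hFsub : ∀ A ∈ F, ∃ E ∈ H, A ⊂ E)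
    (hF2 : ∀ A ∈ F, 2 ≤ A.card) :
    ∑ E ∈ H.filter (fun E => 2 ≤ E.card), (1 / (2 * n : ℝ)) ^ E.card
    ≤ ∑ E ∈ ((H \ H.filter (fun E => ∃ A ∈ F, A ⊆ E)) ∪ F).filter (fun E => 2 ≤ E.card),
        (1 / (2 * n : ℝ)) ^ E.card :=
  stmt_12_general n H F hV hH hFsub hF2
end

section
/- Let F be a nonempty antichain of subsets of a set V, each member of F being a proper subset of some member of an antichain H on V. Define H' = (H \ ⟨F⟩) ∪ F, where ⟨F⟩ is the up-closure of F. Then H' is an antichain, F ∩ ⟨H⟩ = ∅, and ⟨H⟩ ⊊ ⟨H'⟩. -/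
/-!
If every member of `t` lies strictly below a member of the antichain `s`, then no member of `s`
lies below a member of `t` (it would lie strictly below another member of `s`). Hence nothing of
`t` is in `⟨s⟩`, the two parts of `(s \ ⟨t⟩) ∪ t` are incomparable, and any member of the nonempty
`t` witnesses that `⟨s⟩ ⊆ ⟨(s \ ⟨t⟩) ∪ t⟩` is strict.
-/

section Preorder

variable {α : Type*} [Preorder α] {s t : Set α}

theorem notMem_upperClosure_of_lt_mem_antichain (hs : IsAntichain (· ≤ ·) s)
    (hlt : ∀ a ∈ t, ∃ b ∈ s, a < b) {a : α} (ha : a ∈ t) : a ∉ upperClosure s := by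
  rintro ⟨c, hc, hca⟩
  obtain ⟨b, hb, hab⟩ := hlt a ha
  exact hs.not_lt hc hb (hca.trans_lt hab)

theorem isAntichain_diff_upperClosure_union (hs : IsAntichain (· ≤ ·) s)
    (ht : IsAntichain (· ≤ ·) t) (hlt : ∀ a ∈ t, ∃ b ∈ s, a < b) :
    IsAntichain (· ≤ ·) (s \ upperClosure t ∪ t) := by
  refine isAntichain_union.2 ⟨hs.subset Set.sdiff_subset, ht, ?_⟩
  rintro b ⟨hb, hbt⟩ a ha -
  exact ⟨fun hba => notMem_upperClosure_of_lt_mem_antichain hs hlt ha ⟨b, hb, hba⟩,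
    fun hab => hbt ⟨a, ha, hab⟩⟩

theorem upperClosure_ssubset_upperClosure_diff_union (hs : IsAntichain (· ≤ ·) s)
    (hlt : ∀ a ∈ t, ∃ b ∈ s, a < b) (htne : t.Nonempty) :
    (upperClosure s : Set α) ⊂ upperClosure (s \ upperClosure t ∪ t) := by
  refine ⟨?_, fun hsup => ?_⟩
  · rintro x ⟨b, hb, hbx⟩
    by_cases hbt : b ∈ upperClosure t
    · obtain ⟨a, ha, hab⟩ := hbt
      exact ⟨a, Or.inr ha, hab.trans hbx⟩
    · exact ⟨b, Or.inl ⟨hb, hbt⟩, hbx⟩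
  · obtain ⟨a, ha⟩ := htne
    exact notMem_upperClosure_of_lt_mem_antichain hs hlt ha (hsup ⟨a, Or.inr ha, le_rfl⟩)

end Preorder

theorem Finset.setOf_exists_subset_eq_upperClosure {V : Type*} (G : Finset (Finset V)) :
    {S : Finset V | ∃ E ∈ G, E ⊆ S} = upperClosure (G : Set (Finset V)) := by
  ext S
  simp [mem_upperClosure]

theorem stmt_17_general {V : Type*} [DecidableEq V]
    (H F : Finset (Finset V)) (hne : F.Nonempty)
    (hH : IsAntichain (· ⊆ ·) (H : Set (Finset V)))
    (hF : IsAntichain (· ⊆ ·) (F : Set (Finset V)))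
    (hsub : ∀ A ∈ F, ∃ E ∈ H, A ⊂ E) :
    IsAntichain (· ⊆ ·)
        (((H \ H.filter (fun E => ∃ A ∈ F, A ⊆ E)) ∪ F : Finset (Finset V)) :
          Set (Finset V)) ∧
    (∀ A ∈ F, ¬ ∃ E ∈ H, E ⊆ A) ∧
    {S : Finset V | ∃ E ∈ H, E ⊆ S} ⊂
      {S : Finset V | ∃ E ∈ (H \ H.filter (fun E => ∃ A ∈ F, A ⊆ E)) ∪ F, E ⊆ S} := by
  have hcoe : ((H \ H.filter (fun E => ∃ A ∈ F, A ⊆ E)) ∪ F : Finset (Finset V)) =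
      (H : Set (Finset V)) \ upperClosure (F : Set (Finset V)) ∪ F := by
    rw [← Finset.filter_not]
    ext E
    simp [mem_upperClosure]
  simp only [Finset.setOf_exists_subset_eq_upperClosure, hcoe]
  exact ⟨isAntichain_diff_upperClosure_union hH hF hsub,
    fun A hA => notMem_upperClosure_of_lt_mem_antichain hH hsub hA,
    upperClosure_ssubset_upperClosure_diff_union hH hsub (by exact_mod_cast hne)⟩

/-- Invariants of the container algorithm update (Lemma 4.1): if F is a nonempty
antichain each of whose members is a proper subset of some edge of the antichain H,
then H' = (H \ ⟨F⟩) ∪ F is an antichain, F ∩ ⟨H⟩ = ∅, and ⟨H⟩ ⊊ ⟨H'⟩. -/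
theorem stmt_17 {V : Type*} [Fintype V] [DecidableEq V]
    (H F : Finset (Finset V)) (hne : F.Nonempty)
    (hH : IsAntichain (· ⊆ ·) (H : Set (Finset V)))
    (hF : IsAntichain (· ⊆ ·) (F : Set (Finset V)))
    (hsub : ∀ A ∈ F, ∃ E ∈ H, A ⊂ E) :
    IsAntichain (· ⊆ ·)
        (((H \ H.filter (fun E => ∃ A ∈ F, A ⊆ E)) ∪ F : Finset (Finset V)) :
          Set (Finset V)) ∧
    (∀ A ∈ F, ¬ ∃ E ∈ H, E ⊆ A) ∧
    {S : Finset V | ∃ E ∈ H, E ⊆ S} ⊂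
      {S : Finset V | ∃ E ∈ (H \ H.filter (fun E => ∃ A ∈ F, A ⊆ E)) ∪ F, E ⊆ S} :=
  stmt_17_general H F hne hH hF hsub
end
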